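/- Let a ∈ ℝⁿ, let k ∈ ℕ, and for each 0 ≤ i ≤ k let Λ_i : (ℝⁿ)^i → ℝᵐ be a symmetric continuous i-multilinear map. Then there exists a C^∞ map ψ : ℝⁿ → ℝᵐ such that the i-th iterated Fréchet derivative of ψ at a equals Λ_i for all 0 ≤ i ≤ k. -/

import Mathlib

section Aux

variable {E F : Type*} [NormedAddCommGroup E] [NormedSpace ℝ E]
  [NormedAddCommGroup F] [NormedSpace ℝ F]

lemma aux_fderiv_shift (g : E → F) (c x : E) :
    fderiv ℝ (fun y => g (y + c)) x = fderiv ℝ g (x + c) := by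
  by_cases h : DifferentiableAt ℝ g (x + c)
  · have : HasFDerivAt (fun y => g (y + c)) (fderiv ℝ g (x + c)) x := by
      have := h.hasFDerivAt.comp x ((hasFDerivAt_id x).add_const c)
      simpa [Function.comp_def] using this
    exact this.fderiv
  · have h' : ¬ DifferentiableAt ℝ (fun y => g (y + c)) x := by
      intro hd
      have : DifferentiableAt ℝ (fun z => g ((z - c) + c)) (x + c) :=
        ((by rw [add_sub_cancel_right]; exact hd :
          DifferentiableAt ℝ (fun y => g (y + c)) (x + c - c))).comp (x + c)
          (g := fun y => g (y + c)) (f := fun z => z - c) ((differentiableAt_id).sub_const c)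
      exact h (by simpa using this)
    rw [fderiv_zero_of_not_differentiableAt h, fderiv_zero_of_not_differentiableAt h']

lemma aux_iter_shift (g : E → F) (c : E) (j : ℕ) (x : E) :
    iteratedFDeriv ℝ j (fun y => g (y + c)) x = iteratedFDeriv ℝ j g (x + c) := by
  induction j generalizing x with
  | zero => ext; simp
  | succ j IH =>
    have hfun : iteratedFDeriv ℝ j (fun y => g (y + c))
        = fun y => iteratedFDeriv ℝ j g (y + c) := funext fun y => IH y
    rw [iteratedFDeriv_succ_eq_comp_left, iteratedFDeriv_succ_eq_comp_left]
    simp only [Function.comp_apply, hfun]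
    rw [aux_fderiv_shift (iteratedFDeriv ℝ j g) c x]

/-- The diagonal continuous linear map. -/
noncomputable def diagL (c : ℕ) : E →L[ℝ] (Fin c → E) :=
  ContinuousLinearMap.pi fun _ => ContinuousLinearMap.id ℝ E

@[simp] lemma diagL_apply (c : ℕ) (x : E) (p : Fin c) : diagL c x p = x := rfl

lemma aux_diag_contDiff (c : ℕ) (f : ContinuousMultilinearMap ℝ (fun _ : Fin c => E) F) :
    ContDiff ℝ (⊤ : ℕ∞) (fun x : E => f (fun _ => x)) := by
  have h1 : (fun x : E => f (fun _ => x)) = f ∘ (diagL c) := rfl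
  rw [h1]
  exact f.contDiff.comp (diagL (E := E) c).contDiff

lemma aux_iter_diag_eq (c j : ℕ) (f : ContinuousMultilinearMap ℝ (fun _ : Fin c => E) F) :
    iteratedFDeriv ℝ j (fun x : E => f (fun _ => x)) 0
      = (f.iteratedFDeriv j 0).compContinuousLinearMap (fun _ => diagL c) := by
  have h1 : (fun x : E => f (fun _ => x)) = f ∘ (diagL c) := rfl
  rw [h1, (diagL (E := E) c).iteratedFDeriv_comp_right (n := (⊤ : ℕ∞)) f.contDiff 0 (by exact_mod_cast le_top),
    map_zero, f.iteratedFDeriv_eq]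

lemma aux_iter_diag_ne (c j : ℕ) (h : j ≠ c)
    (f : ContinuousMultilinearMap ℝ (fun _ : Fin c => E) F) :
    iteratedFDeriv ℝ j (fun x : E => f (fun _ => x)) 0 = 0 := by
  classical
  rw [aux_iter_diag_eq]
  have hz : f.iteratedFDeriv j (0 : Fin c → E) = 0 := by
    rw [ContinuousMultilinearMap.iteratedFDeriv]
    apply Finset.sum_eq_zero
    intro e _
    rcases lt_or_gt_of_ne h with hlt | hgt
    · have hns : ∃ p, p ∉ Set.range e := by
        by_contra h'
        push_neg at h'
        have : Function.Surjective e := fun p => h' p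
        have := Fintype.card_le_of_surjective e this
        simp only [Fintype.card_fin] at this
        omega
      obtain ⟨p, hp⟩ := hns
      ext w
      rw [ContinuousMultilinearMap.iteratedFDerivComponent_apply]
      refine Eq.trans (f.map_coord_zero p ?_) (by simp)
      simp [hp]
    · exact absurd (by simpa using Fintype.card_le_of_injective e e.injective) (by omega)
  ext w
  simp [hz]

lemma aux_iter_diag_self (c : ℕ) (f : ContinuousMultilinearMap ℝ (fun _ : Fin c => E) F)
    (hsym : ∀ (σ : Equiv.Perm (Fin c)) (v : Fin c → E), f (v ∘ σ) = f v) :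
    iteratedFDeriv ℝ c (fun x : E => f (fun _ => x)) 0 = (c.factorial : ℝ) • f := by
  classical
  rw [aux_iter_diag_eq]
  ext v
  rw [ContinuousMultilinearMap.compContinuousLinearMap_apply,
    ContinuousMultilinearMap.iteratedFDeriv, ContinuousMultilinearMap.sum_apply]
  trans (∑ _e : Fin c ↪ Fin c, f v)
  · refine Finset.sum_congr rfl fun e _ => ?_
    have hbij : Function.Bijective e := Finite.injective_iff_bijective.1 e.injective
    set σ : Equiv.Perm (Fin c) := Equiv.ofBijective e hbij with hσ
    have hr : ∀ p : Fin c, p ∈ Set.range e := fun p => hbij.2 p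
    have key : ∀ (p : Fin c) (hp : p ∈ Set.range ⇑e) (inst : DecidableEq (Fin c)),
        (@Function.Embedding.toEquivRange _ _ _ inst e).symm ⟨p, hp⟩ = σ.symm p := by
      intro p hp inst
      rw [Equiv.symm_apply_eq, Function.Embedding.toEquivRange_apply]
      exact Subtype.ext (Equiv.ofBijective_apply_symm_apply _ hbij p).symm
    rw [ContinuousMultilinearMap.iteratedFDerivComponent_apply]
    refine (congrArg f (funext fun p => ?_)).trans (hsym σ.symm v)
    rw [dif_pos (hr p)]
    simp only [diagL_apply, Function.comp_apply]
    exact congrArg v (key p _ _)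
  · rw [Finset.sum_const, Finset.card_univ, Fintype.card_embedding_eq, Fintype.card_fin,
      Nat.descFactorial_self, ContinuousMultilinearMap.smul_apply, Nat.cast_smul_eq_nsmul]

end Aux

/-- **Every jet is realized by a smooth map.** Given a point `a ∈ ℝⁿ` and, for each
`0 ≤ i ≤ k`, a symmetric continuous `i`-multilinear map `Λᵢ : (ℝⁿ)^i → ℝᵐ`, there is a
`C^∞` map `ψ : ℝⁿ → ℝᵐ` whose `i`-th iterated Fréchet derivative at `a` is `Λᵢ` for all
`0 ≤ i ≤ k`. -/
theorem jet_realization (n m k : ℕ) (a : EuclideanSpace ℝ (Fin n))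
    (Λ : ∀ i : Fin (k + 1),
      ContinuousMultilinearMap ℝ (fun _ : Fin (i : ℕ) => EuclideanSpace ℝ (Fin n))
        (EuclideanSpace ℝ (Fin m)))
    (hsymm : ∀ (i : Fin (k + 1)) (σ : Equiv.Perm (Fin (i : ℕ)))
      (v : Fin (i : ℕ) → EuclideanSpace ℝ (Fin n)), Λ i (v ∘ σ) = Λ i v) :
    ∃ ψ : EuclideanSpace ℝ (Fin n) → EuclideanSpace ℝ (Fin m),
      ContDiff ℝ (⊤ : ℕ∞) ψ ∧ ∀ i : Fin (k + 1), iteratedFDeriv ℝ (i : ℕ) ψ a = Λ i := by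
  classical
  set g : ∀ i : Fin (k + 1), EuclideanSpace ℝ (Fin n) → EuclideanSpace ℝ (Fin m) :=
    fun i x => Λ i (fun _ => x) with hg
  set t : ∀ i : Fin (k + 1), EuclideanSpace ℝ (Fin n) → EuclideanSpace ℝ (Fin m) :=
    fun i x => (((i : ℕ).factorial : ℝ)⁻¹) • g i (x - a) with ht
  have hgsmooth : ∀ i, ContDiff ℝ (⊤ : ℕ∞) (g i) := fun i => aux_diag_contDiff _ (Λ i)
  have htsmooth : ∀ i, ContDiff ℝ (⊤ : ℕ∞) (t i) := by
    intro i
    exact (((hgsmooth i).comp (contDiff_id.sub contDiff_const))).const_smul _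
  refine ⟨fun x => ∑ i : Fin (k + 1), t i x, ?_, ?_⟩
  · exact ContDiff.sum fun i _ => htsmooth i
  · intro j
    have hsum : iteratedFDeriv ℝ (j : ℕ) (∑ i : Fin (k + 1), t i ·) a
        = ∑ i : Fin (k + 1), iteratedFDeriv ℝ (j : ℕ) (t i) a := by
      rw [iteratedFDeriv_sum fun i _ => (htsmooth i).of_le (by exact_mod_cast le_top)]
      simp
    have hshift : ∀ i, iteratedFDeriv ℝ (j : ℕ) (t i) a
        = (((i : ℕ).factorial : ℝ)⁻¹) • iteratedFDeriv ℝ (j : ℕ) (g i) 0 := by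
      intro i
      have h1 : t i = (((i : ℕ).factorial : ℝ)⁻¹) • fun y => g i (y + (-a)) := by
        funext y
        simp [ht, sub_eq_add_neg]
      have hc : ContDiff ℝ (j : ℕ) (fun y => g i (y + -a)) := by
        exact ((hgsmooth i).comp (contDiff_id.add contDiff_const)).of_le (by exact_mod_cast le_top)
      rw [h1, iteratedFDeriv_const_smul_apply hc.contDiffAt,
        aux_iter_shift (g i) (-a) (j : ℕ) a, add_neg_cancel]
    have hmain : ∀ i : Fin (k + 1), i ≠ j →
        iteratedFDeriv ℝ (j : ℕ) (t i) a = 0 := by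
      intro i hij
      have hne : (j : ℕ) ≠ (i : ℕ) := fun h => hij (Fin.ext h.symm)
      rw [hshift i, aux_iter_diag_ne _ _ hne (Λ i), smul_zero]
    have hj : iteratedFDeriv ℝ (j : ℕ) (t j) a = Λ j := by
      rw [hshift j, aux_iter_diag_self _ (Λ j) (hsymm j), smul_smul,
        inv_mul_cancel₀ (by exact_mod_cast (Nat.factorial_pos (j : ℕ)).ne'), one_smul]
    calc iteratedFDeriv ℝ (j : ℕ) (fun x => ∑ i : Fin (k + 1), t i x) a
        = ∑ i : Fin (k + 1), iteratedFDeriv ℝ (j : ℕ) (t i) a := hsum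
      _ = Λ j := by
          rw [Finset.sum_eq_single j (fun i _ hij => hmain i hij) (by simp)]
          exact hj
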